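/- arXiv:2105.10829 — 4 statements merged into one kernel-verified Lean document; each statement's English description precedes it below -/
import Mathlib

section
/- Let (M^n, g) be a Riemannian manifold with nonnegative sectional curvature. At any point, in an orthonormal basis of eigenvectors of the Ricci tensor with eigenvalues λ_i, one has (∇_i∇_j R_{ik} − ∇_j∇_i R_{ik})R_{jk} = Σ_{i<j} R_{ijij}(λ_i − λ_j)² ≥ 0, i.e. the contraction R_{ij}R_{jk}R_{ik} − R_{ijkl}R_{jl}R_{ik} is nonnegative. -/
open scoped BigOperators

lemma sum_pair_aux {n : ℕ} (g : Fin n → Fin n → ℝ) (hg : ∀ i, g i i = 0) :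
    ∑ i : Fin n, ∑ j : Fin n, g i j
      = ∑ i : Fin n, ∑ j : Fin n, (if i < j then g i j + g j i else 0) := by
  have hsplit : ∀ i j : Fin n,
      g i j = (if i < j then g i j else 0) + (if j < i then g i j else 0) := by
    intro i j
    rcases lt_trichotomy i j with h | h | h
    · simp [h, asymm h]
    · subst h; simp [hg]
    · simp [h, asymm h]
  calc ∑ i : Fin n, ∑ j : Fin n, g i j
      = ∑ i : Fin n, ∑ j : Fin n,
          ((if i < j then g i j else 0) + (if j < i then g i j else 0)) := by
        exact Finset.sum_congr rfl fun i _ => Finset.sum_congr rfl fun j _ => hsplit i j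
    _ = (∑ i : Fin n, ∑ j : Fin n, (if i < j then g i j else 0))
        + ∑ i : Fin n, ∑ j : Fin n, (if j < i then g i j else 0) := by
        simp [Finset.sum_add_distrib]
    _ = (∑ i : Fin n, ∑ j : Fin n, (if i < j then g i j else 0))
        + ∑ i : Fin n, ∑ j : Fin n, (if i < j then g j i else 0) := by
        congr 1
        rw [Finset.sum_comm]
    _ = ∑ i : Fin n, ∑ j : Fin n, (if i < j then g i j + g j i else 0) := by
        rw [← Finset.sum_add_distrib]
        refine Finset.sum_congr rfl fun i _ => ?_
        rw [← Finset.sum_add_distrib]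
        refine Finset.sum_congr rfl fun j _ => ?_
        split <;> simp

/-- At a point of a Riemannian manifold with nonnegative sectional curvature,
in an orthonormal eigenbasis of the Ricci tensor (eigenvalues `λ_i`), the contraction of the
second covariant derivative commutator of the Ricci tensor satisfies
`(∇_i∇_j R_{ik} − ∇_j∇_i R_{ik})R_{jk} = Σ_{i<j} R_{ijij}(λ_i − λ_j)² ≥ 0`,
i.e. `R_{ij}R_{jk}R_{ik} − R_{ijkl}R_{jl}R_{ik} ≥ 0`.
Here `DDRic i j k l` denotes `∇_i∇_j R_{kl}` and the Ricci identity is assumed. -/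
theorem sec_nonneg_ricci_commutator
    (n : ℕ)
    (Riem : Fin n → Fin n → Fin n → Fin n → ℝ)
    (Ric : Fin n → Fin n → ℝ) (lam : Fin n → ℝ)
    (DDRic : Fin n → Fin n → Fin n → Fin n → ℝ)
    (hRicciId : ∀ i j k l, DDRic i j k l - DDRic j i k l
      = (∑ s : Fin n, Riem i j k s * Ric s l) + ∑ s : Fin n, Riem i j l s * Ric k s)
    (hdiag : ∀ i j, Ric i j = if i = j then lam i else 0)
    (htrace : ∀ i j, Ric i j = ∑ k : Fin n, Riem k i k j)
    (hskew1 : ∀ i j k l, Riem i j k l = - Riem j i k l)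
    (hskew2 : ∀ i j k l, Riem i j k l = - Riem i j l k)
    (hpair : ∀ i j k l, Riem i j k l = Riem k l i j)
    (hsec : ∀ i j, 0 ≤ Riem i j i j) :
    ((∑ i : Fin n, ∑ j : Fin n, ∑ k : Fin n, (DDRic i j i k - DDRic j i i k) * Ric j k)
        = ∑ i : Fin n, ∑ j : Fin n,
            (if i < j then Riem i j i j * (lam i - lam j) ^ 2 else 0))
    ∧ (0 ≤ ∑ i : Fin n, ∑ j : Fin n, ∑ k : Fin n,
          (DDRic i j i k - DDRic j i i k) * Ric j k)
    ∧ (0 ≤ (∑ i : Fin n, ∑ j : Fin n, ∑ k : Fin n, Ric i j * Ric j k * Ric i k)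
          - ∑ i : Fin n, ∑ j : Fin n, ∑ k : Fin n, ∑ l : Fin n,
              Riem i j k l * Ric j l * Ric i k) := by
  have hRR : ∀ i j : Fin n, Riem j i j i = Riem i j i j := by
    intro i j
    rw [hskew1 j i j i, hskew2 i j j i, neg_neg]
  have hzero : ∀ i : Fin n, Riem i i i i = 0 := by
    intro i
    have := hskew1 i i i i
    linarith
  -- Part 1
  have hA : (∑ i : Fin n, ∑ j : Fin n, ∑ k : Fin n,
        (DDRic i j i k - DDRic j i i k) * Ric j k)
      = ∑ i : Fin n, ∑ j : Fin n, Riem i j i j * (lam j ^ 2 - lam i * lam j) := by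
    refine Finset.sum_congr rfl fun i _ => Finset.sum_congr rfl fun j _ => ?_
    simp only [hRicciId, hdiag]
    simp only [mul_ite, mul_zero, ite_mul, zero_mul, Finset.sum_ite_eq,
      Finset.sum_ite_eq', Finset.mem_univ, if_true, add_mul]
    rw [hskew2 i j j i]
    ring
  have hEq : (∑ i : Fin n, ∑ j : Fin n, ∑ k : Fin n,
        (DDRic i j i k - DDRic j i i k) * Ric j k)
      = ∑ i : Fin n, ∑ j : Fin n,
          (if i < j then Riem i j i j * (lam i - lam j) ^ 2 else 0) := by
    rw [hA, sum_pair_aux (fun i j => Riem i j i j * (lam j ^ 2 - lam i * lam j))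
      (by intro i; simp [hzero])]
    refine Finset.sum_congr rfl fun i _ => Finset.sum_congr rfl fun j _ => ?_
    split
    · rw [hRR i j]; ring
    · rfl
  refine ⟨hEq, ?_, ?_⟩
  · rw [hEq]
    refine Finset.sum_nonneg fun i _ => Finset.sum_nonneg fun j _ => ?_
    split
    · exact mul_nonneg (hsec i j) (sq_nonneg _)
    · exact le_rfl
  · have hS1 : (∑ i : Fin n, ∑ j : Fin n, ∑ k : Fin n, Ric i j * Ric j k * Ric i k)
        = ∑ i : Fin n, ∑ j : Fin n, Riem j i j i * lam i ^ 2 := by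
      have : (∑ i : Fin n, ∑ j : Fin n, ∑ k : Fin n, Ric i j * Ric j k * Ric i k)
          = ∑ i : Fin n, lam i * lam i * lam i := by
        refine Finset.sum_congr rfl fun i _ => ?_
        simp only [hdiag]
        simp [Finset.sum_ite_eq, Finset.sum_ite_eq', mul_ite, ite_mul, mul_zero, zero_mul]
      rw [this]
      refine Finset.sum_congr rfl fun i _ => ?_
      have h := hdiag i i
      rw [htrace i i] at h
      simp at h
      rw [← Finset.sum_mul]
      rw [← h]
      ring
    have hS2 : (∑ i : Fin n, ∑ j : Fin n, ∑ k : Fin n, ∑ l : Fin n,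
          Riem i j k l * Ric j l * Ric i k)
        = ∑ i : Fin n, ∑ j : Fin n, Riem i j i j * (lam j * lam i) := by
      refine Finset.sum_congr rfl fun i _ => Finset.sum_congr rfl fun j _ => ?_
      simp only [hdiag]
      simp [Finset.sum_ite_eq, Finset.sum_ite_eq', mul_ite, ite_mul, mul_zero, zero_mul,
        Finset.mul_sum]
      ring
    rw [hS1, hS2]
    have hcomb : (∑ i : Fin n, ∑ j : Fin n, Riem j i j i * lam i ^ 2)
        - (∑ i : Fin n, ∑ j : Fin n, Riem i j i j * (lam j * lam i))
        = ∑ i : Fin n, ∑ j : Fin n,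
            (Riem i j i j * (lam i ^ 2 - lam i * lam j)) := by
      rw [← Finset.sum_sub_distrib]
      refine Finset.sum_congr rfl fun i _ => ?_
      rw [← Finset.sum_sub_distrib]
      refine Finset.sum_congr rfl fun j _ => ?_
      rw [hRR i j]
      ring
    rw [hcomb, sum_pair_aux (fun i j => Riem i j i j * (lam i ^ 2 - lam i * lam j))
      (by intro i; simp [hzero])]
    refine Finset.sum_nonneg fun i _ => Finset.sum_nonneg fun j _ => ?_
    split
    · rename_i h
      rw [hRR i j]
      have : Riem i j i j * (lam i ^ 2 - lam i * lam j)
          + Riem i j i j * (lam j ^ 2 - lam j * lam i)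
          = Riem i j i j * (lam i - lam j) ^ 2 := by ring
      rw [this]
      exact mul_nonneg (hsec i j) (sq_nonneg _)
    · exact le_refl 0
end

section
/- Let M = S^{p+1}_+ × S^q with metric g = dr² + sin²r · g_{S^p} + ((q−1)/(p+m)) g_{S^q}, where r ∈ [0, π/2] is the height-function parameter on the hemisphere S^{p+1}_+, m > 0, q ≥ 2. Then with u = cos r and λ = p + m, the quadruple (M, g, u, λ) satisfies ∇²u = (u/m)(Ric − λ g), u > 0 on the interior, and u = 0 on the boundary; i.e., it is a nontrivial compact m-quasi-Einstein manifold with boundary. -/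
/-! On the hemisphere `u = cos r` satisfies `u'' = -u` and `u'·sin' = -u·sin`, i.e. `∇²u = -u g`
there, while the hemisphere directions have Ricci eigenvalue `p`; so `(u/m)(Ric - λ)` with
`λ = p + m` equals `-u` in those directions. The radius of the `S^q` factor is chosen so that its
Ricci eigenvalue `(q - 1)/ψ²` is exactly `λ`, and there `∇²u = 0` because `ψ` is constant. -/

open Real

theorem Real.deriv_deriv_sin (r : ℝ) : deriv (deriv sin) r = -sin r := by
  simp [Real.deriv_sin, Real.deriv_cos']

theorem Real.deriv_deriv_cos (r : ℝ) : deriv (deriv cos) r = -cos r := by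
  simp [Real.deriv_cos', Real.deriv_sin]

section WarpedRicci

variable (p q c r : ℝ)

theorem sinWarped_ricci_radial (hr : sin r ≠ 0) :
    -p * deriv (deriv sin) r / sin r - q * deriv (deriv fun _ : ℝ => c) r / c = p := by
  simp only [Real.deriv_deriv_sin, deriv_const', mul_zero, zero_div, sub_zero]
  field_simp

theorem sinWarped_ricci_sin_factor (hr : sin r ≠ 0) :
    -deriv (deriv sin) r / sin r + (p - 1) * (1 - deriv sin r ^ 2) / sin r ^ 2
      - q * (deriv sin r * deriv (fun _ : ℝ => c) r) / (sin r * c) = p := by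
  have h_one_sub_cos_sq : 1 - cos r ^ 2 = sin r ^ 2 := by linarith [sin_sq_add_cos_sq r]
  rw [Real.deriv_deriv_sin, Real.deriv_sin, deriv_const', h_one_sub_cos_sq]
  field_simp
  ring

theorem sinWarped_ricci_const_factor :
    -deriv (deriv fun _ : ℝ => c) r / c + (q - 1) * (1 - deriv (fun _ : ℝ => c) r ^ 2) / c ^ 2
      - p * (deriv sin r * deriv (fun _ : ℝ => c) r) / (sin r * c) = (q - 1) / c ^ 2 := by
  simp [deriv_const']

end WarpedRicci

theorem div_sq_sqrt_div_self {k l : ℝ} (hk : 0 < k) (hl : 0 < l) : k / √(k / l) ^ 2 = l := by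
  rw [sq_sqrt (div_pos hk hl).le]
  field_simp

/-- On `M = S^{p+1}_+ × S^q` with the doubly warped product metric
`g = dr² + sin²r·g_{S^p} + ((q−1)/(p+m))·g_{S^q}` (so `φ = sin`, `ψ = √((q−1)/(p+m))`
constant), with `u = cos r` and `λ = p + m`, the quadruple satisfies the m-quasi-Einstein
equation `∇²u = (u/m)(Ric − λg)`, `u > 0` on the interior and `u = 0` on the boundary
`{r = π/2}`.  Using the warped-product formulas, `∇²u` has components `u''` (radial),
`u'·φ'φ` relative to `g_{S^p}` and `u'·ψ'ψ` relative to `g_{S^q}`, while the Ricci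
eigenvalues `ρ_r, ρ_X, ρ_Y` are given by the standard formulas; the quasi-Einstein
equation is its three block components below. -/
theorem hemisphere_times_sphere_quasiEinstein
    (p q : ℕ) (m : ℝ) (hm : 0 < m) (hq : 2 ≤ q)
    (φ ψ u : ℝ → ℝ) (lam : ℝ)
    (hφ : φ = Real.sin)
    (hψ : ψ = fun _ => Real.sqrt (((q : ℝ) - 1) / ((p : ℝ) + m)))
    (hu : u = Real.cos)
    (hlam : lam = (p : ℝ) + m)
    (ρr ρX ρY : ℝ → ℝ)
    (hρr : ∀ r, ρr r = -(p : ℝ) * deriv (deriv φ) r / φ r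
        - (q : ℝ) * deriv (deriv ψ) r / ψ r)
    (hρX : ∀ r, ρX r = -(deriv (deriv φ) r) / φ r
        + ((p : ℝ) - 1) * (1 - (deriv φ r) ^ 2) / (φ r) ^ 2
        - (q : ℝ) * (deriv φ r * deriv ψ r) / (φ r * ψ r))
    (hρY : ∀ r, ρY r = -(deriv (deriv ψ) r) / ψ r
        + ((q : ℝ) - 1) * (1 - (deriv ψ r) ^ 2) / (ψ r) ^ 2
        - (p : ℝ) * (deriv φ r * deriv ψ r) / (φ r * ψ r)) :
    (∀ r ∈ Set.Ioo (0 : ℝ) (Real.pi / 2),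
        deriv (deriv u) r = (u r / m) * (ρr r - lam)
      ∧ deriv u r * deriv φ r * φ r = (u r / m) * (ρX r - lam) * (φ r) ^ 2
      ∧ deriv u r * deriv ψ r * ψ r = (u r / m) * (ρY r - lam) * (ψ r) ^ 2)
    ∧ (∀ r ∈ Set.Ico (0 : ℝ) (Real.pi / 2), 0 < u r)
    ∧ u (Real.pi / 2) = 0 := by
  subst hφ hψ hu hlam
  have hq_sub_one : (0 : ℝ) < q - 1 := by
    have : (2 : ℝ) ≤ q := by exact_mod_cast hq
    linarith
  have h_sphere_einstein := div_sq_sqrt_div_self hq_sub_one (by positivity : (0 : ℝ) < p + m)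
  refine ⟨fun r hr => ?_, fun r hr => cos_pos_of_mem_Ioo ⟨by linarith [pi_pos, hr.1], hr.2⟩,
    cos_pi_div_two⟩
  have hsin : sin r ≠ 0 := (sin_pos_of_pos_of_lt_pi hr.1 (by linarith [pi_pos, hr.2])).ne'
  rw [hρr, hρX, hρY, sinWarped_ricci_radial _ _ _ _ hsin, sinWarped_ricci_sin_factor _ _ _ _ hsin,
    sinWarped_ricci_const_factor, h_sphere_einstein, Real.deriv_deriv_cos, Real.deriv_cos',
    Real.deriv_sin, deriv_const']
  refine ⟨?_, ?_, by ring⟩ <;> field_simp <;> ring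
end

section
/- Let (M^n, g, u, λ) be an m-quasi-Einstein manifold. Then the Cotton tensor satisfies u·C_{ijk} = m·W_{ijkl}∇_l u + T_{ijk}, where T_{ijk} = ((m+n−2)/(n−2))(R_{ik}∇_j u − R_{jk}∇_i u) + (m/(n−2))(R_{jl}∇_l u g_{ik} − R_{il}∇_l u g_{jk}) + (((n−1)(n−2)λ + mR)/((n−1)(n−2)))(∇_i u g_{jk} − ∇_j u g_{ik}) − (u/(2(n−1)))(∇_i R g_{jk} − ∇_j R g_{ik}). -/
open scoped BigOperators

/-- Lemma CWT: For an m-quasi-Einstein manifold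
(`∇²u = (u/m)(Ric − λg)`), the Cotton tensor satisfies
`u·C_{ijk} = m·W_{ijkl}∇_l u + T_{ijk}` with `T` as in the paper.  Here, in an
orthonormal frame at a point: `du = ∇u`, `Hess = ∇²u`, `dRic a b c = ∇_a R_{bc}`,
`dR a = ∇_a R`, `D3u a b c = ∇_a∇_b∇_c u`, `Riem` the Riemann tensor, `W` the Weyl
tensor (via the standard decomposition), and the Ricci identity for 1-forms, the
contracted second Bianchi identity, and the differentiated quasi-Einstein equation
are assumed. -/
theorem cotton_weyl_T_identity
    (n : ℕ) (hn : 3 ≤ n) (m lam u R : ℝ) (hm : 0 < m)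
    (g Ric Hess : Fin n → Fin n → ℝ) (du dR : Fin n → ℝ)
    (dRic : Fin n → Fin n → Fin n → ℝ)
    (Riem W : Fin n → Fin n → Fin n → Fin n → ℝ)
    (D3u : Fin n → Fin n → Fin n → ℝ)
    (C T : Fin n → Fin n → Fin n → ℝ)
    (hg : ∀ i j, g i j = if i = j then (1 : ℝ) else 0)
    (hRicSym : ∀ i j, Ric i j = Ric j i)
    (hR : R = ∑ i : Fin n, Ric i i)
    (hdRicSym : ∀ a b c, dRic a b c = dRic a c b)
    (hdR : ∀ a, dR a = ∑ b : Fin n, dRic a b b)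
    (hBianchi : ∀ a, ∑ b : Fin n, dRic b a b = dR a / 2)
    (hQE : ∀ i j, Hess i j = (u / m) * (Ric i j - lam * g i j))
    (hdQE : ∀ a b c, m * D3u a b c = du a * Ric b c + u * dRic a b c - lam * du a * g b c)
    (hRicciId : ∀ i j k, D3u i j k - D3u j i k = ∑ s : Fin n, Riem i j k s * du s)
    (hdecomp : ∀ i j k l, Riem i j k l = W i j k l
        + (1 / ((n : ℝ) - 2)) * (Ric i k * g j l + Ric j l * g i k
            - Ric i l * g j k - Ric j k * g i l)
        - (R / (((n : ℝ) - 1) * ((n : ℝ) - 2))) * (g j l * g i k - g i l * g j k))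
    (hC : ∀ i j k, C i j k = dRic i j k - dRic j i k
        - (1 / (2 * ((n : ℝ) - 1))) * (dR i * g j k - dR j * g i k))
    (hT : ∀ i j k, T i j k
        = ((m + (n : ℝ) - 2) / ((n : ℝ) - 2)) * (Ric i k * du j - Ric j k * du i)
        + (m / ((n : ℝ) - 2)) * ((∑ l : Fin n, Ric j l * du l) * g i k
            - (∑ l : Fin n, Ric i l * du l) * g j k)
        + ((((n : ℝ) - 1) * ((n : ℝ) - 2) * lam + m * R)
            / (((n : ℝ) - 1) * ((n : ℝ) - 2))) * (du i * g j k - du j * g i k)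
        - (u / (2 * ((n : ℝ) - 1))) * (dR i * g j k - dR j * g i k)) :
    ∀ i j k, u * C i j k = m * (∑ l : Fin n, W i j k l * du l) + T i j k := by
  intro i j k
  have hN : (3 : ℝ) ≤ (n : ℝ) := by exact_mod_cast hn
  have h2 : ((n : ℝ) - 2) ≠ 0 := by linarith
  have h1 : ((n : ℝ) - 1) ≠ 0 := by linarith
  have hgsum : ∀ a : Fin n, ∑ s : Fin n, g a s * du s = du a := by
    intro a; simp [hg]
  have key : ∑ s : Fin n, Riem i j k s * du s
      = (∑ s : Fin n, W i j k s * du s)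
        + (1 / ((n : ℝ) - 2)) * (Ric i k * du j
            + (∑ l : Fin n, Ric j l * du l) * g i k
            - (∑ l : Fin n, Ric i l * du l) * g j k - Ric j k * du i)
        - (R / (((n : ℝ) - 1) * ((n : ℝ) - 2))) * (du j * g i k - du i * g j k) := by
    have e : ∀ s : Fin n, Riem i j k s * du s
        = W i j k s * du s
          + (1 / ((n : ℝ) - 2)) * (Ric i k * (g j s * du s))
          + (g i k / ((n : ℝ) - 2)) * (Ric j s * du s)
          - (g j k / ((n : ℝ) - 2)) * (Ric i s * du s)
          - (1 / ((n : ℝ) - 2)) * (Ric j k * (g i s * du s))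
          - (R * g i k / (((n : ℝ) - 1) * ((n : ℝ) - 2))) * (g j s * du s)
          + (R * g j k / (((n : ℝ) - 1) * ((n : ℝ) - 2))) * (g i s * du s) := by
      intro s; rw [hdecomp i j k s]; ring
    rw [Finset.sum_congr rfl fun s _ => e s]
    simp only [Finset.sum_add_distrib, Finset.sum_sub_distrib, ← Finset.mul_sum, hgsum]
    ring
  have final : u * (dRic i j k - dRic j i k)
      = m * (∑ s : Fin n, W i j k s * du s)
        + (m / ((n : ℝ) - 2)) * (Ric i k * du j
            + (∑ l : Fin n, Ric j l * du l) * g i k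
            - (∑ l : Fin n, Ric i l * du l) * g j k - Ric j k * du i)
        - (m * R / (((n : ℝ) - 1) * ((n : ℝ) - 2))) * (du j * g i k - du i * g j k)
        - du i * Ric j k + du j * Ric i k
        + lam * (du i * g j k - du j * g i k) := by
    linear_combination hdQE j i k - hdQE i j k + m * hRicciId i j k + m * key
  have c2 : ((n : ℝ) - 2) * (1 / ((n : ℝ) - 2)) = 1 := by field_simp
  have c1 : (((n : ℝ) - 1) * ((n : ℝ) - 2)) * (1 / (((n : ℝ) - 1) * ((n : ℝ) - 2))) = 1 := by
    field_simp
  rw [hC i j k, hT i j k]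
  linear_combination final - (Ric i k * du j - Ric j k * du i) * c2
    - lam * (du i * g j k - du j * g i k) * c1
end

section
/- Let (M^n, g, u, λ) be an m-quasi-Einstein manifold. Then the contraction C_{ijk}∇_i u R_{jk} = −((n−2)/(2(m+n−2)))·C_{ijk}T_{ijk}, where C is the Cotton tensor and T is the tensor T_{ijk} = ((m+n−2)/(n−2))(R_{ik}∇_j u − R_{jk}∇_i u) + (m/(n−2))(R_{jl}∇_l u g_{ik} − R_{il}∇_l u g_{jk}) + (((n−1)(n−2)λ + mR)/((n−1)(n−2)))(∇_i u g_{jk} − ∇_j u g_{ik}) − (u/(2(n−1)))(∇_i R g_{jk} − ∇_j R g_{ik}). -/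
/-!
Only the first term of `T` survives the contraction with `C`. The terms built from `g` have
the shape `x_i g_{jk} - x_j g_{ik}`, which `C` kills because it is trace-free in `(j, k)` and,
by skew-symmetry, also in `(i, k)`. Skew-symmetry turns the first term into
`-2 (m+n-2)/(n-2) · C_{ijk} ∇_i u R_{jk}`.
-/

open Finset

section SkewTraceFree

variable {ι R : Type*} [Fintype ι] [CommRing R] {C : ι → ι → ι → R}

theorem sum_mul_antisymmetrize_eq (hskew : ∀ i j k, C i j k = -C j i k)
    (A : ι → ι → R) (v : ι → R) :
    ∑ i, ∑ j, ∑ k, C i j k * (A i k * v j - A j k * v i)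
      = -2 * ∑ i, ∑ j, ∑ k, C i j k * v i * A j k := by
  have hswap : ∑ i, ∑ j, ∑ k, C i j k * A i k * v j
      = -∑ i, ∑ j, ∑ k, C i j k * v i * A j k := by
    rw [sum_comm]
    simp only [← sum_neg_distrib]
    exact sum_congr rfl fun i _ => sum_congr rfl fun j _ => sum_congr rfl fun k _ => by
      rw [hskew j i k]; ring
  simp only [mul_sub, sum_sub_distrib, ← mul_assoc, hswap]
  simp only [mul_right_comm _ (A _ _)]
  ring

theorem sum_trace_left_eq_zero (hskew : ∀ i j k, C i j k = -C j i k)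
    (htr : ∀ i, ∑ j, C i j j = 0) (j : ι) : ∑ i, C i j i = 0 := by
  simp only [hskew _ j, sum_neg_distrib, htr, neg_zero]

theorem sum_mul_traceTerm_eq_zero [DecidableEq ι] (hskew : ∀ i j k, C i j k = -C j i k)
    (htr : ∀ i, ∑ j, C i j j = 0) (x : ι → R) :
    ∑ i, ∑ j, ∑ k, C i j k * (x i * (if j = k then 1 else 0) - x j * (if i = k then 1 else 0))
      = 0 := by
  simp only [mul_sub, mul_ite, mul_one, mul_zero, sum_sub_distrib, sum_ite_eq, mem_univ,
    if_true]
  rw [sum_comm (f := fun i j => C i j i * x j)]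
  simp only [← sum_mul, htr, sum_trace_left_eq_zero hskew htr, zero_mul, sum_const_zero,
    sub_zero]

end SkewTraceFree

theorem cotton_T_contraction_general
    (n : ℕ) (hn : 3 ≤ n) (m lam u R : ℝ) (hm : 0 < m)
    (g Ric : Fin n → Fin n → ℝ) (du dR : Fin n → ℝ)
    (C T : Fin n → Fin n → Fin n → ℝ)
    (hg : ∀ i j, g i j = if i = j then (1 : ℝ) else 0)
    (hCskew : ∀ i j k, C i j k = - C j i k)
    (hCtr2 : ∀ i, ∑ j : Fin n, C i j j = 0)
    (hT : ∀ i j k, T i j k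
        = ((m + (n : ℝ) - 2) / ((n : ℝ) - 2)) * (Ric i k * du j - Ric j k * du i)
        + (m / ((n : ℝ) - 2)) * ((∑ l : Fin n, Ric j l * du l) * g i k
            - (∑ l : Fin n, Ric i l * du l) * g j k)
        + ((((n : ℝ) - 1) * ((n : ℝ) - 2) * lam + m * R)
            / (((n : ℝ) - 1) * ((n : ℝ) - 2))) * (du i * g j k - du j * g i k)
        - (u / (2 * ((n : ℝ) - 1))) * (dR i * g j k - dR j * g i k)) :
    ∑ i : Fin n, ∑ j : Fin n, ∑ k : Fin n, C i j k * du i * Ric j k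
      = -(((n : ℝ) - 2) / (2 * (m + (n : ℝ) - 2)))
          * ∑ i : Fin n, ∑ j : Fin n, ∑ k : Fin n, C i j k * T i j k := by
  have hn' : (3 : ℝ) ≤ n := by exact_mod_cast hn
  have hn2 : (n : ℝ) - 2 ≠ 0 := by linarith
  have hmn : m + (n : ℝ) - 2 ≠ 0 := by linarith
  set a := (m + (n : ℝ) - 2) / ((n : ℝ) - 2)
  set b := m / ((n : ℝ) - 2)
  set c := (((n : ℝ) - 1) * ((n : ℝ) - 2) * lam + m * R) / (((n : ℝ) - 1) * ((n : ℝ) - 2))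
  set d := u / (2 * ((n : ℝ) - 1))
  set Rdu : Fin n → ℝ := fun i => ∑ l, Ric i l * du l
  let traceTerm (x : Fin n → ℝ) (i j k : Fin n) : ℝ :=
    x i * (if j = k then 1 else 0) - x j * (if i = k then 1 else 0)
  have hCT : ∑ i, ∑ j, ∑ k, C i j k * T i j k
      = a * ∑ i, ∑ j, ∑ k, C i j k * (Ric i k * du j - Ric j k * du i)
        - b * ∑ i, ∑ j, ∑ k, C i j k * traceTerm Rdu i j k
        + c * ∑ i, ∑ j, ∑ k, C i j k * traceTerm du i j k
        - d * ∑ i, ∑ j, ∑ k, C i j k * traceTerm dR i j k := by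
    simp only [mul_sum, ← sum_sub_distrib, ← sum_add_distrib]
    exact sum_congr rfl fun i _ => sum_congr rfl fun j _ => sum_congr rfl fun k _ => by
      simp only [hT, hg, traceTerm, Rdu]; ring
  rw [hCT, sum_mul_antisymmetrize_eq hCskew, sum_mul_traceTerm_eq_zero hCskew hCtr2,
    sum_mul_traceTerm_eq_zero hCskew hCtr2, sum_mul_traceTerm_eq_zero hCskew hCtr2]
  simp only [a]
  field_simp
  ring

/-- For an m-quasi-Einstein manifold, the contraction
`C_{ijk}∇_i u R_{jk} = −((n−2)/(2(m+n−2)))·C_{ijk}T_{ijk}` holds, where `C` is the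
Cotton tensor (skew-symmetric in its first two indices and trace-free, as used in the
contraction) and `T` is the auxiliary tensor of Lemma CWT.  Stated in an orthonormal
frame at a point, with `du = ∇u`, `dR = ∇R`. -/
theorem cotton_T_contraction
    (n : ℕ) (hn : 3 ≤ n) (m lam u R : ℝ) (hm : 0 < m)
    (g Ric Hess : Fin n → Fin n → ℝ) (du dR : Fin n → ℝ)
    (C T : Fin n → Fin n → Fin n → ℝ)
    (hg : ∀ i j, g i j = if i = j then (1 : ℝ) else 0)
    (hRicSym : ∀ i j, Ric i j = Ric j i)
    (hR : R = ∑ i : Fin n, Ric i i)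
    (hQE : ∀ i j, Hess i j = (u / m) * (Ric i j - lam * g i j))
    (hCskew : ∀ i j k, C i j k = - C j i k)
    (hCtr1 : ∀ k, ∑ i : Fin n, C i i k = 0)
    (hCtr2 : ∀ i, ∑ j : Fin n, C i j j = 0)
    (hT : ∀ i j k, T i j k
        = ((m + (n : ℝ) - 2) / ((n : ℝ) - 2)) * (Ric i k * du j - Ric j k * du i)
        + (m / ((n : ℝ) - 2)) * ((∑ l : Fin n, Ric j l * du l) * g i k
            - (∑ l : Fin n, Ric i l * du l) * g j k)
        + ((((n : ℝ) - 1) * ((n : ℝ) - 2) * lam + m * R)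
            / (((n : ℝ) - 1) * ((n : ℝ) - 2))) * (du i * g j k - du j * g i k)
        - (u / (2 * ((n : ℝ) - 1))) * (dR i * g j k - dR j * g i k)) :
    ∑ i : Fin n, ∑ j : Fin n, ∑ k : Fin n, C i j k * du i * Ric j k
      = -(((n : ℝ) - 2) / (2 * (m + (n : ℝ) - 2)))
          * ∑ i : Fin n, ∑ j : Fin n, ∑ k : Fin n, C i j k * T i j k :=
  cotton_T_contraction_general n hn m lam u R hm g Ric du dR C T hg hCskew hCtr2 hT
end
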